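/- For a + b + c = n, the vector v_out^n_{a,b,c} ∈ V_a^n ⊗ V_b^n ⊗ V_c^n is U_q(sl_n)-invariant: for every i = 1, …, n−1, Δ^{(2)}(X_i^±) · v_out^n_{a,b,c} = 0 and Δ^{(2)}(K_i) · v_out^n_{a,b,c} = v_out^n_{a,b,c}; equivalently, the 𝔸-linear map 𝔸 → V_a^n ⊗ V_b^n ⊗ V_c^n sending 1 to v_out^n_{a,b,c} is a map of U_q(sl_n)-modules. -/

import Mathlib

noncomputable section

open scoped TensorProduct

set_option maxHeartbeats 1000000
set_option synthInstance.maxHeartbeats 400000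

/-- The ground field `𝔸 = ℚ(q)`. -/
abbrev A : Type := RatFunc ℚ

/-- The element `q ∈ 𝔸`. -/
def qq : A := RatFunc.X

/-- The set of `a`-element subsets of `{0, 1, …, n-1}` (a model for the
`a`-element subsets of `{1, …, n}`), the basis of `V_a^n`. -/
abbrev BS (n a : ℕ) : Type := {s : Finset ℕ // s ⊆ Finset.range n ∧ s.card = a}

instance BS.fintype (n a : ℕ) : Fintype (BS n a) :=
  Fintype.subtype ((Finset.range n).powerset.filter fun s => s.card = a) (by
    intro s
    simp [Finset.mem_powerset, Finset.mem_filter])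

/-- The fundamental representation `V_a^n`, as the `𝔸`-vector space with basis the
`a`-element subsets of an `n`-element set. -/
abbrev V (n a : ℕ) : Type := BS n a → A

/-- `i₋₁ : V_{a-1}^{n-1} → V_a^n` (here with indices shifted:
`iminus n a : V_a^n → V_{a+1}^{n+1}`), the inclusion of the summand of subsets containing
the new top element `n`. -/
def iminus (n a : ℕ) : V n a →ₗ[A] V (n+1) (a+1) where
  toFun f s := if h : n ∈ s.1 then
      f ⟨s.1.erase n, by
        constructor
        · intro x hx
          have hx' := Finset.mem_erase.mp hx
          have hx2 := s.2.1 hx'.2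
          simp only [Finset.mem_range] at hx2 ⊢
          omega
        · rw [Finset.card_erase_of_mem h, s.2.2]; omega⟩
    else 0
  map_add' f g := by
    funext s
    simp only [Pi.add_apply]
    by_cases h : n ∈ s.1 <;> simp [h]
  map_smul' c f := by
    funext s
    simp only [Pi.smul_apply, smul_eq_mul, RingHom.id_apply]
    by_cases h : n ∈ s.1 <;> simp [h]

/-- `i₀ : V_a^{n-1} → V_a^n` (as `izero n a : V_a^n → V_a^{n+1}`), the inclusion of the
summand of subsets not containing the new top element. -/
def izero (n a : ℕ) : V n a →ₗ[A] V (n+1) a where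
  toFun f s := if h : n ∈ s.1 then 0 else
      f ⟨s.1, by
        refine ⟨fun x hx => ?_, s.2.2⟩
        have hx2 := s.2.1 hx
        simp only [Finset.mem_range] at hx2 ⊢
        rcases Nat.lt_succ_iff_lt_or_eq.mp hx2 with h' | h'
        · exact h'
        · exact absurd (h' ▸ hx) h⟩
  map_add' f g := by
    funext s
    simp only [Pi.add_apply]
    by_cases h : n ∈ s.1 <;> simp [h]
  map_smul' c f := by
    funext s
    simp only [Pi.smul_apply, smul_eq_mul, RingHom.id_apply]
    by_cases h : n ∈ s.1 <;> simp [h]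

/-- `p₋₁ : V_a^n → V_{a-1}^{n-1}` (as `pminus n a : V_{a+1}^{n+1} → V_a^n`), the projection
onto the summand of subsets containing the top element. -/
def pminus (n a : ℕ) : V (n+1) (a+1) →ₗ[A] V n a where
  toFun f t := f ⟨insert n t.1, by
    have hn : n ∉ t.1 := fun h => by
      have := t.2.1 h; simp [Finset.mem_range] at this
    constructor
    · intro x hx
      rcases Finset.mem_insert.mp hx with rfl | hx
      · simp
      · have := t.2.1 hx; simp only [Finset.mem_range] at this ⊢; omega
    · rw [Finset.card_insert_of_notMem hn, t.2.2]⟩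
  map_add' f g := rfl
  map_smul' c f := rfl

/-- `p₀ : V_a^n → V_a^{n-1}` (as `pzero n a : V_a^{n+1} → V_a^n`), the projection onto the
summand of subsets not containing the top element. -/
def pzero (n a : ℕ) : V (n+1) a →ₗ[A] V n a where
  toFun f t := f ⟨t.1, by
    refine ⟨fun x hx => ?_, t.2.2⟩
    have := t.2.1 hx; simp only [Finset.mem_range] at this ⊢; omega⟩
  map_add' f g := rfl
  map_smul' c f := rfl

/-- The diagonal operator on `V_a^n` acting by the scalar `x` on basis subsets containing `m`
and by `y` on those not containing `m`; for `m = n-1` this is `x • i₋₁ p₋₁ + y • i₀ p₀`. -/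
def diagOp (n a m : ℕ) (x y : A) : Module.End A (V n a) where
  toFun f s := (if m ∈ s.1 then x else y) * f s
  map_add' f g := by
    funext s
    simp only [Pi.add_apply]
    ring
  map_smul' c f := by
    funext s
    simp only [Pi.smul_apply, smul_eq_mul, RingHom.id_apply]
    ring

/-- The recursively defined action of the generator `X_i^+` on `V_a^n`
(`XpOp n a i`, where `i` is the literal subscript, `1 ≤ i ≤ n-1`). -/
def XpOp : (n a i : ℕ) → Module.End A (V n a)
  | 0, _, _ => 0
  | 1, _, _ => 0
  | _+2, 0, _ => 0
  | n+2, a+1, i =>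
    if a + 1 = n + 2 then 0
    else if i = n + 1 then
      (iminus (n+1) a) ∘ₗ (izero n a) ∘ₗ (pminus n a) ∘ₗ (pzero (n+1) (a+1))
    else
      (iminus (n+1) a) ∘ₗ (XpOp (n+1) a i) ∘ₗ (pminus (n+1) a)
      + (izero (n+1) (a+1)) ∘ₗ (XpOp (n+1) (a+1) i) ∘ₗ (pzero (n+1) (a+1))

/-- The recursively defined action of the generator `X_i^-` on `V_a^n`. -/
def XmOp : (n a i : ℕ) → Module.End A (V n a)
  | 0, _, _ => 0
  | 1, _, _ => 0
  | _+2, 0, _ => 0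
  | n+2, a+1, i =>
    if a + 1 = n + 2 then 0
    else if i = n + 1 then
      (izero (n+1) (a+1)) ∘ₗ (iminus n a) ∘ₗ (pzero n a) ∘ₗ (pminus (n+1) a)
    else
      (iminus (n+1) a) ∘ₗ (XmOp (n+1) a i) ∘ₗ (pminus (n+1) a)
      + (izero (n+1) (a+1)) ∘ₗ (XmOp (n+1) (a+1) i) ∘ₗ (pzero (n+1) (a+1))

/-- The recursively defined action of the generator `K_i` on `V_a^n`.  The middle factors
`diagOp … 1 q` and `diagOp … q⁻¹ 1` are the operators `i₋₁ p₋₁ + q i₀ p₀` and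
`q⁻¹ i₋₁ p₋₁ + i₀ p₀` of the recursion. -/
def KOp : (n a i : ℕ) → Module.End A (V n a)
  | 0, _, _ => 1
  | 1, _, _ => 1
  | _+2, 0, _ => 1
  | n+2, a+1, i =>
    if a + 1 = n + 2 then 1
    else if i = n + 1 then
      (iminus (n+1) a) ∘ₗ (diagOp (n+1) a n 1 qq) ∘ₗ (pminus (n+1) a)
      + (izero (n+1) (a+1)) ∘ₗ (diagOp (n+1) (a+1) n qq⁻¹ 1) ∘ₗ (pzero (n+1) (a+1))
    else
      (iminus (n+1) a) ∘ₗ (KOp (n+1) a i) ∘ₗ (pminus (n+1) a)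
      + (izero (n+1) (a+1)) ∘ₗ (KOp (n+1) (a+1) i) ∘ₗ (pzero (n+1) (a+1))

/-- The recursively defined action of `K_i⁻¹` on `V_a^n` (the inverse of `KOp`),
given by the same recursion with `q` and `q⁻¹` interchanged. -/
def KinvOp : (n a i : ℕ) → Module.End A (V n a)
  | 0, _, _ => 1
  | 1, _, _ => 1
  | _+2, 0, _ => 1
  | n+2, a+1, i =>
    if a + 1 = n + 2 then 1
    else if i = n + 1 then
      (iminus (n+1) a) ∘ₗ (diagOp (n+1) a n 1 qq⁻¹) ∘ₗ (pminus (n+1) a)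
      + (izero (n+1) (a+1)) ∘ₗ (diagOp (n+1) (a+1) n qq 1) ∘ₗ (pzero (n+1) (a+1))
    else
      (iminus (n+1) a) ∘ₗ (KinvOp (n+1) a i) ∘ₗ (pminus (n+1) a)
      + (izero (n+1) (a+1)) ∘ₗ (KinvOp (n+1) (a+1) i) ∘ₗ (pzero (n+1) (a+1))
/-! ### The quantum group `U_q(sl_n)` by generators and relations.

We present the algebra with `m = n - 1` generators of each kind `K i, K i⁻¹, X i⁺, X i⁻`,
indexed by `i : Fin m` (so `i` corresponds to the subscript `i + 1 ∈ {1, …, n-1}`). -/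

/-- Generators of `U_q(sl_n)` (with `m = n-1`). -/
inductive UqGen (m : ℕ) : Type
  | K : Fin m → UqGen m
  | Kinv : Fin m → UqGen m
  | Xp : Fin m → UqGen m
  | Xm : Fin m → UqGen m

/-- The free `𝔸`-algebra on the generators. -/
abbrev FA (m : ℕ) : Type := FreeAlgebra A (UqGen m)

namespace FA
variable {m : ℕ}
def K (i : Fin m) : FA m := FreeAlgebra.ι A (UqGen.K i)
def Kinv (i : Fin m) : FA m := FreeAlgebra.ι A (UqGen.Kinv i)
def Xp (i : Fin m) : FA m := FreeAlgebra.ι A (UqGen.Xp i)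
def Xm (i : Fin m) : FA m := FreeAlgebra.ι A (UqGen.Xm i)
end FA

/-- The Cartan integers `(i,j)` of type `A_m`: `2` if `i = j`, `-1` if `|i-j| = 1`,
`0` if `|i-j| ≥ 2`. -/
def cart {m : ℕ} (i j : Fin m) : ℤ :=
  if i = j then 2 else if (i : ℕ) + 1 = j ∨ (j : ℕ) + 1 = i then -1 else 0

/-- The defining relations of `U_q(sl_n)`. -/
inductive uqRel (m : ℕ) : FA m → FA m → Prop
  | KKinv (i : Fin m) : uqRel m (FA.K i * FA.Kinv i) 1
  | KinvK (i : Fin m) : uqRel m (FA.Kinv i * FA.K i) 1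
  | KK (i j : Fin m) : uqRel m (FA.K i * FA.K j) (FA.K j * FA.K i)
  | KXp (i j : Fin m) : uqRel m (FA.K i * FA.Xp j) (qq ^ (cart i j) • (FA.Xp j * FA.K i))
  | KXm (i j : Fin m) : uqRel m (FA.K i * FA.Xm j) (qq ^ (-cart i j) • (FA.Xm j * FA.K i))
  | XpXm (i j : Fin m) :
      uqRel m (FA.Xp i * FA.Xm j - FA.Xm j * FA.Xp i)
        (if i = j then (qq - qq⁻¹)⁻¹ • (FA.K i - FA.Kinv i) else 0)
  | XpXp (i j : Fin m) (h : (i : ℕ) + 2 ≤ j ∨ (j : ℕ) + 2 ≤ i) :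
      uqRel m (FA.Xp i * FA.Xp j) (FA.Xp j * FA.Xp i)
  | XmXm (i j : Fin m) (h : (i : ℕ) + 2 ≤ j ∨ (j : ℕ) + 2 ≤ i) :
      uqRel m (FA.Xm i * FA.Xm j) (FA.Xm j * FA.Xm i)
  | serreP (i j : Fin m) (h : (i : ℕ) + 1 = j ∨ (j : ℕ) + 1 = i) :
      uqRel m (FA.Xp i ^ 2 * FA.Xp j - (qq + qq⁻¹) • (FA.Xp i * FA.Xp j * FA.Xp i)
        + FA.Xp j * FA.Xp i ^ 2) 0
  | serreM (i j : Fin m) (h : (i : ℕ) + 1 = j ∨ (j : ℕ) + 1 = i) :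
      uqRel m (FA.Xm i ^ 2 * FA.Xm j - (qq + qq⁻¹) • (FA.Xm i * FA.Xm j * FA.Xm i)
        + FA.Xm j * FA.Xm i ^ 2) 0

/-- The quantum group `U_q(sl_{m+1})`, presented by generators and relations.
For `U_q(sl_n)` take `m = n - 1`. -/
abbrev Uq (m : ℕ) : Type := RingQuot (uqRel m)

namespace Uq
variable {m : ℕ}
/-- The generator `K_{i+1}` of `U_q(sl_n)`. -/
def K (i : Fin m) : Uq m := RingQuot.mkAlgHom A (uqRel m) (FA.K i)
/-- The generator `K_{i+1}⁻¹` of `U_q(sl_n)`. -/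
def Kinv (i : Fin m) : Uq m := RingQuot.mkAlgHom A (uqRel m) (FA.Kinv i)
/-- The generator `X_{i+1}^+` of `U_q(sl_n)`. -/
def Xp (i : Fin m) : Uq m := RingQuot.mkAlgHom A (uqRel m) (FA.Xp i)
/-- The generator `X_{i+1}^-` of `U_q(sl_n)`. -/
def Xm (i : Fin m) : Uq m := RingQuot.mkAlgHom A (uqRel m) (FA.Xm i)
end Uq
/-! ### The duality maps `d_{a,n}`, triple invariants, and the pivotal elements `τ`. -/

/-- The sum-of-coefficients functional on `V_a^n`. -/
def sumF (n a : ℕ) : V n a →ₗ[A] A where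
  toFun f := ∑ s : BS n a, f s
  map_add' f g := by simp [Finset.sum_add_distrib]
  map_smul' c f := by simp [Finset.mul_sum]

/-- The "trivial" map `V_a^n → (V_c^n)^*`; when `V_a^n` and `V_c^n` are one-dimensional
(`a = 0` or `a = n`, and correspondingly for `c`) it sends the basis vector to the dual
basis vector.  Used for the base cases of `d_{a,n}`. -/
def dtriv (n a c : ℕ) : V n a →ₗ[A] Module.Dual A (V n c) :=
  LinearMap.smulRight (sumF n a) (sumF n c)

/-- The map `d_{a,n} : V_a^n → (V_{n-a}^n)^*`, defined recursively by
`d_{a,n} = i₀ ∘ d_{a-1,n-1} ∘ p₋₁ + (-q)^{-a} i₋₁ ∘ d_{a,n-1} ∘ p₀`, with both base cases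
sending the basis vector to the dual basis vector.  Here `dmap n a c` has target
`(V_c^n)^*`, to be used with `c = n - a`. -/
def dmap : (n a c : ℕ) → (V n a →ₗ[A] Module.Dual A (V n c))
  | 0, a, c => dtriv 0 a c
  | n+1, 0, c => dtriv (n+1) 0 c
  | n+1, a+1, c =>
    if a + 1 = n + 1 then dtriv (n+1) (a+1) c
    else
      match c with
      | 0 => 0
      | c+1 =>
        (pzero n (c+1)).dualMap ∘ₗ (dmap n a (c+1)) ∘ₗ (pminus n a)
        + ((-qq) ^ (a+1))⁻¹ •
            ((pminus n c).dualMap ∘ₗ (dmap n (a+1) c) ∘ₗ (pzero n (a+1)))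

section voutvin

open TensorProduct

/-- First term of the recursion for `v_out`: `(-1)^c q^{b+c} (i₋₁ ⊗ i₀ ⊗ i₀)`. -/
def vterm1 (n a b c : ℕ) (v : V n a ⊗[A] (V n b ⊗[A] V n c)) :
    V (n+1) (a+1) ⊗[A] (V (n+1) b ⊗[A] V (n+1) c) :=
  ((-1 : A)^c * qq^(b+c)) •
    (TensorProduct.map (iminus n a) (TensorProduct.map (izero n b) (izero n c)) v)

/-- Second term of the recursion for `v_out`: `(-1)^a q^c (i₀ ⊗ i₋₁ ⊗ i₀)`. -/
def vterm2 (n a b c : ℕ) (v : V n a ⊗[A] (V n b ⊗[A] V n c)) :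
    V (n+1) a ⊗[A] (V (n+1) (b+1) ⊗[A] V (n+1) c) :=
  ((-1 : A)^a * qq^c) •
    (TensorProduct.map (izero n a) (TensorProduct.map (iminus n b) (izero n c)) v)

/-- Third term of the recursion for `v_out`: `(-1)^b (i₀ ⊗ i₀ ⊗ i₋₁)`. -/
def vterm3 (n a b c : ℕ) (v : V n a ⊗[A] (V n b ⊗[A] V n c)) :
    V (n+1) a ⊗[A] (V (n+1) b ⊗[A] V (n+1) (c+1)) :=
  ((-1 : A)^b) •
    (TensorProduct.map (izero n a) (TensorProduct.map (izero n b) (iminus n c)) v)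

/-- The triple invariant `v_out^n_{a,b,c} ∈ V_a^n ⊗ V_b^n ⊗ V_c^n` (intended for
`a + b + c = n`), defined by the recursion of Definition `defn:trivalent-vertices`,
omitting any term with a negative subscript. -/
def voutE : (n a b c : ℕ) → V n a ⊗[A] (V n b ⊗[A] V n c)
  | 0, _, _, _ => (fun _ => (1:A)) ⊗ₜ[A] ((fun _ => (1:A)) ⊗ₜ[A] (fun _ => (1:A)))
  | n+1, 0, 0, 0 => 0
  | n+1, a+1, 0, 0 => vterm1 n a 0 0 (voutE n a 0 0)
  | n+1, 0, b+1, 0 => vterm2 n 0 b 0 (voutE n 0 b 0)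
  | n+1, 0, 0, c+1 => vterm3 n 0 0 c (voutE n 0 0 c)
  | n+1, a+1, b+1, 0 =>
      vterm1 n a (b+1) 0 (voutE n a (b+1) 0) + vterm2 n (a+1) b 0 (voutE n (a+1) b 0)
  | n+1, a+1, 0, c+1 =>
      vterm1 n a 0 (c+1) (voutE n a 0 (c+1)) + vterm3 n (a+1) 0 c (voutE n (a+1) 0 c)
  | n+1, 0, b+1, c+1 =>
      vterm2 n 0 b (c+1) (voutE n 0 b (c+1)) + vterm3 n 0 (b+1) c (voutE n 0 (b+1) c)
  | n+1, a+1, b+1, c+1 =>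
      vterm1 n a (b+1) (c+1) (voutE n a (b+1) (c+1))
      + vterm2 n (a+1) b (c+1) (voutE n (a+1) b (c+1))
      + vterm3 n (a+1) (b+1) c (voutE n (a+1) (b+1) c)

/-- First term of the recursion for `v_in`: `(-1)^c (…) ∘ (p₋₁ ⊗ p₀ ⊗ p₀)`. -/
def wterm1 (n a b c : ℕ) (φ : V n a ⊗[A] (V n b ⊗[A] V n c) →ₗ[A] A) :
    V (n+1) (a+1) ⊗[A] (V (n+1) b ⊗[A] V (n+1) c) →ₗ[A] A :=
  ((-1 : A)^c) •
    (φ ∘ₗ TensorProduct.map (pminus n a) (TensorProduct.map (pzero n b) (pzero n c)))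

/-- Second term of the recursion for `v_in`: `(-1)^a q^{-a} (…) ∘ (p₀ ⊗ p₋₁ ⊗ p₀)`. -/
def wterm2 (n a b c : ℕ) (φ : V n a ⊗[A] (V n b ⊗[A] V n c) →ₗ[A] A) :
    V (n+1) a ⊗[A] (V (n+1) (b+1) ⊗[A] V (n+1) c) →ₗ[A] A :=
  ((-1 : A)^a * (qq^a)⁻¹) •
    (φ ∘ₗ TensorProduct.map (pzero n a) (TensorProduct.map (pminus n b) (pzero n c)))

/-- Third term of the recursion for `v_in`: `(-1)^b q^{-a-b} (…) ∘ (p₀ ⊗ p₀ ⊗ p₋₁)`. -/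
def wterm3 (n a b c : ℕ) (φ : V n a ⊗[A] (V n b ⊗[A] V n c) →ₗ[A] A) :
    V (n+1) a ⊗[A] (V (n+1) b ⊗[A] V (n+1) (c+1)) →ₗ[A] A :=
  ((-1 : A)^b * (qq^(a+b))⁻¹) •
    (φ ∘ₗ TensorProduct.map (pzero n a) (TensorProduct.map (pzero n b) (pminus n c)))

/-- The triple coinvariant `v_in^n_{a,b,c} : V_a^n ⊗ V_b^n ⊗ V_c^n → 𝔸` (intended for
`a + b + c = n`), defined recursively, omitting any term with a negative subscript. -/
def vinE : (n a b c : ℕ) → (V n a ⊗[A] (V n b ⊗[A] V n c) →ₗ[A] A)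
  | 0, a, b, c =>
      (LinearMap.mul' A A) ∘ₗ
        TensorProduct.map (sumF 0 a)
          ((LinearMap.mul' A A) ∘ₗ TensorProduct.map (sumF 0 b) (sumF 0 c))
  | n+1, 0, 0, 0 => 0
  | n+1, a+1, 0, 0 => wterm1 n a 0 0 (vinE n a 0 0)
  | n+1, 0, b+1, 0 => wterm2 n 0 b 0 (vinE n 0 b 0)
  | n+1, 0, 0, c+1 => wterm3 n 0 0 c (vinE n 0 0 c)
  | n+1, a+1, b+1, 0 =>
      wterm1 n a (b+1) 0 (vinE n a (b+1) 0) + wterm2 n (a+1) b 0 (vinE n (a+1) b 0)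
  | n+1, a+1, 0, c+1 =>
      wterm1 n a 0 (c+1) (vinE n a 0 (c+1)) + wterm3 n (a+1) 0 c (vinE n (a+1) 0 c)
  | n+1, 0, b+1, c+1 =>
      wterm2 n 0 b (c+1) (vinE n 0 b (c+1)) + wterm3 n 0 (b+1) c (vinE n 0 (b+1) c)
  | n+1, a+1, b+1, c+1 =>
      wterm1 n a (b+1) (c+1) (vinE n a (b+1) (c+1))
      + wterm2 n (a+1) b (c+1) (vinE n (a+1) b (c+1))
      + wterm3 n (a+1) (b+1) c (vinE n (a+1) (b+1) c)

end voutvin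

/-- The operator `∏_{j=1}^{n-1} K_j^j` on `V_a^n`. -/
def kjOp (n a : ℕ) : Module.End A (V n a) :=
  (List.ofFn fun i : Fin (n-1) => (KOp n a ((i : ℕ)+1)) ^ ((i : ℕ)+1)).prod

/-- The pivotal operator `τ_n = ∏_{j=1}^{n-1} K_j^{j(n-j)}` on `V_a^n`. -/
def tauOp (n a : ℕ) : Module.End A (V n a) :=
  (List.ofFn fun i : Fin (n-1) => (KOp n a ((i : ℕ)+1)) ^ (((i : ℕ)+1) * (n - ((i : ℕ)+1)))).prod

/-- The inverse pivotal operator `τ_n⁻¹ = ∏_{j=1}^{n-1} K_j^{-j(n-j)}` on `V_a^n`. -/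
def tauinvOp (n a : ℕ) : Module.End A (V n a) :=
  (List.ofFn fun i : Fin (n-1) => (KinvOp n a ((i : ℕ)+1)) ^ (((i : ℕ)+1) * (n - ((i : ℕ)+1)))).prod

/-- The element `τ_n = ∏_{j=1}^{n-1} K_j^{j(n-j)} ∈ U_q(sl_n)`. -/
def tauU (n : ℕ) : Uq (n-1) :=
  (List.ofFn fun i : Fin (n-1) => (Uq.K i) ^ (((i : ℕ)+1) * (n - ((i : ℕ)+1)))).prod

/-- The Cartan integers for literal subscripts `i, j ∈ {1, …, n-1}`. -/
def cartN (i j : ℕ) : ℤ :=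
  if i = j then 2 else if i + 1 = j ∨ j + 1 = i then -1 else 0

/-- The action of `Δ⁽²⁾(X_i⁺) = X_i⁺ ⊗ K_i ⊗ K_i + 1 ⊗ X_i⁺ ⊗ K_i + 1 ⊗ 1 ⊗ X_i⁺` on
`V_a^n ⊗ V_b^n ⊗ V_c^n`. -/
def t3Xp (n a b c i : ℕ) : Module.End A (V n a ⊗[A] (V n b ⊗[A] V n c)) :=
  TensorProduct.map (XpOp n a i) (TensorProduct.map (KOp n b i) (KOp n c i))
  + TensorProduct.map LinearMap.id (TensorProduct.map (XpOp n b i) (KOp n c i))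
  + TensorProduct.map LinearMap.id (TensorProduct.map LinearMap.id (XpOp n c i))

/-- The action of `Δ⁽²⁾(X_i⁻) = X_i⁻ ⊗ 1 ⊗ 1 + K_i⁻¹ ⊗ X_i⁻ ⊗ 1 + K_i⁻¹ ⊗ K_i⁻¹ ⊗ X_i⁻`. -/
def t3Xm (n a b c i : ℕ) : Module.End A (V n a ⊗[A] (V n b ⊗[A] V n c)) :=
  TensorProduct.map (XmOp n a i) (TensorProduct.map LinearMap.id LinearMap.id)
  + TensorProduct.map (KinvOp n a i) (TensorProduct.map (XmOp n b i) LinearMap.id)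
  + TensorProduct.map (KinvOp n a i) (TensorProduct.map (KinvOp n b i) (XmOp n c i))

/-- The action of `Δ⁽²⁾(K_i) = K_i ⊗ K_i ⊗ K_i`. -/
def t3K (n a b c i : ℕ) : Module.End A (V n a ⊗[A] (V n b ⊗[A] V n c)) :=
  TensorProduct.map (KOp n a i) (TensorProduct.map (KOp n b i) (KOp n c i))

/-- The action of `Δ⁽²⁾(K_i⁻¹) = K_i⁻¹ ⊗ K_i⁻¹ ⊗ K_i⁻¹`. -/
def t3Kinv (n a b c i : ℕ) : Module.End A (V n a ⊗[A] (V n b ⊗[A] V n c)) :=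
  TensorProduct.map (KinvOp n a i) (TensorProduct.map (KinvOp n b i) (KinvOp n c i))

/-! The generators `X_i^±, K_i` with `i < n - 1` act on `V_a^n = V_{a-1}^{n-1} ⊕ V_a^{n-1}`
summand by summand, so they commute with the inclusions `i₋₁, i₀`; as `v_out^n` is built from
the vectors `v_out^{n-1}` by such inclusions, invariance under them passes from `n - 1` to `n`.
This reduces everything to the top generator `i = n - 1`, which only sees the elements `n - 1`
and `n`. Unfolding the recursion twice writes `v_out^n` as a sum of nine pieces applied to
vectors `v_out^{n-2}`, one for each choice of the tensor slots receiving `n` and `n - 1`. A piece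
whose slot receives both is killed by `X_{n-1}^±` and fixed by `K_{n-1}`; the two pieces that
differ by swapping two slots form a `q`-antisymmetric pair, killed by `Δ⁽²⁾(X_{n-1}^±)` and
fixed by `Δ⁽²⁾(K_{n-1})`. -/

open TensorProduct

lemma BS.isEmpty_of_lt {n a : ℕ} (h : n < a) : IsEmpty (BS n a) :=
  ⟨fun s => by have := Finset.card_le_card s.2.1; rw [s.2.2, Finset.card_range] at this; omega⟩

lemma qq_ne_zero : qq ≠ 0 := RatFunc.X_ne_zero

section Projections

variable {n a : ℕ}

lemma BS.self_notMem (t : BS n a) : n ∉ t.1 := fun h => by simpa using t.2.1 h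

@[simp] lemma pminus_iminus (f : V n a) : pminus n a (iminus n a f) = f := by
  funext t
  simp only [pminus, iminus, LinearMap.coe_mk, AddHom.coe_mk,
    dif_pos (Finset.mem_insert_self n t.1)]
  exact congrArg f (Subtype.ext (Finset.erase_insert (BS.self_notMem t)))

@[simp] lemma pzero_izero (f : V n a) : pzero n a (izero n a f) = f := by
  funext t
  simp [pzero, izero, BS.self_notMem t]

@[simp] lemma pminus_izero (f : V n (a+1)) : pminus n a (izero n (a+1) f) = 0 := by
  funext t
  simp [pminus, izero]

@[simp] lemma pzero_iminus (f : V n a) : pzero n (a+1) (iminus n a f) = 0 := by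
  funext t
  simp [pzero, iminus, BS.self_notMem t]

@[simp] lemma diagOp_iminus (x y : A) (f : V n a) :
    diagOp (n+1) (a+1) n x y (iminus n a f) = x • iminus n a f := by
  funext s
  by_cases h : n ∈ s.1
  · simp [diagOp, h]
  · simp [diagOp, iminus, h]

@[simp] lemma diagOp_izero (x y : A) (f : V n a) :
    diagOp (n+1) a n x y (izero n a f) = y • izero n a f := by
  funext s
  by_cases h : n ∈ s.1
  · simp [diagOp, izero, h]
  · simp [diagOp, h]

lemma block_comp_iminus (f : Module.End A (V n a)) (g : Module.End A (V n (a+1))) :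
    (iminus n a ∘ₗ f ∘ₗ pminus n a + izero n (a+1) ∘ₗ g ∘ₗ pzero n (a+1))
      ∘ₗ iminus n a = iminus n a ∘ₗ f :=
  LinearMap.ext fun v => by simp

lemma block_comp_izero (f : Module.End A (V n a)) (g : Module.End A (V n (a+1))) :
    (iminus n a ∘ₗ f ∘ₗ pminus n a + izero n (a+1) ∘ₗ g ∘ₗ pzero n (a+1))
      ∘ₗ izero n (a+1) = izero n (a+1) ∘ₗ g :=
  LinearMap.ext fun v => by simp

end Projections

section BoundaryValues

variable (n i : ℕ)

@[simp] lemma XpOp_empty : XpOp n 0 i = 0 := by rcases n with _ | _ | n <;> rfl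
@[simp] lemma XmOp_empty : XmOp n 0 i = 0 := by rcases n with _ | _ | n <;> rfl
@[simp] lemma KOp_empty : KOp n 0 i = 1 := by rcases n with _ | _ | n <;> rfl
@[simp] lemma KinvOp_empty : KinvOp n 0 i = 1 := by rcases n with _ | _ | n <;> rfl

@[simp] lemma XpOp_full : XpOp n n i = 0 := by rcases n with _ | _ | n <;> simp [XpOp]
@[simp] lemma XmOp_full : XmOp n n i = 0 := by rcases n with _ | _ | n <;> simp [XmOp]
@[simp] lemma KOp_full : KOp n n i = 1 := by rcases n with _ | _ | n <;> simp [KOp]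
@[simp] lemma KinvOp_full : KinvOp n n i = 1 := by rcases n with _ | _ | n <;> simp [KinvOp]

end BoundaryValues

section LowerGenerators

variable {n a i : ℕ}

lemma XpOp_comp_iminus (hi : i + 1 ≤ n) :
    XpOp (n+1) (a+1) i ∘ₗ iminus n a = iminus n a ∘ₗ XpOp n a i := by
  obtain ⟨n, rfl⟩ : ∃ m, n = m + 1 := ⟨n - 1, by omega⟩
  by_cases ha : a = n + 1
  · subst ha; simp
  · rw [XpOp, if_neg (by omega), if_neg (by omega)]; exact block_comp_iminus _ _

lemma XpOp_comp_izero (hi : i + 1 ≤ n) :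
    XpOp (n+1) a i ∘ₗ izero n a = izero n a ∘ₗ XpOp n a i := by
  obtain ⟨n, rfl⟩ : ∃ m, n = m + 1 := ⟨n - 1, by omega⟩
  rcases a with _ | a
  · simp
  · rcases lt_or_ge (n+1) (a+1) with h | h
    · have := BS.isEmpty_of_lt h; exact Subsingleton.elim _ _
    · rw [XpOp, if_neg (by omega), if_neg (by omega)]; exact block_comp_izero _ _

lemma XmOp_comp_iminus (hi : i + 1 ≤ n) :
    XmOp (n+1) (a+1) i ∘ₗ iminus n a = iminus n a ∘ₗ XmOp n a i := by
  obtain ⟨n, rfl⟩ : ∃ m, n = m + 1 := ⟨n - 1, by omega⟩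
  by_cases ha : a = n + 1
  · subst ha; simp
  · rw [XmOp, if_neg (by omega), if_neg (by omega)]; exact block_comp_iminus _ _

lemma XmOp_comp_izero (hi : i + 1 ≤ n) :
    XmOp (n+1) a i ∘ₗ izero n a = izero n a ∘ₗ XmOp n a i := by
  obtain ⟨n, rfl⟩ : ∃ m, n = m + 1 := ⟨n - 1, by omega⟩
  rcases a with _ | a
  · simp
  · rcases lt_or_ge (n+1) (a+1) with h | h
    · have := BS.isEmpty_of_lt h; exact Subsingleton.elim _ _
    · rw [XmOp, if_neg (by omega), if_neg (by omega)]; exact block_comp_izero _ _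

lemma KOp_comp_iminus (hi : i + 1 ≤ n) :
    KOp (n+1) (a+1) i ∘ₗ iminus n a = iminus n a ∘ₗ KOp n a i := by
  obtain ⟨n, rfl⟩ : ∃ m, n = m + 1 := ⟨n - 1, by omega⟩
  by_cases ha : a = n + 1
  · subst ha; simp [Module.End.one_eq_id]
  · rw [KOp, if_neg (by omega), if_neg (by omega)]; exact block_comp_iminus _ _

lemma KOp_comp_izero (hi : i + 1 ≤ n) :
    KOp (n+1) a i ∘ₗ izero n a = izero n a ∘ₗ KOp n a i := by
  obtain ⟨n, rfl⟩ : ∃ m, n = m + 1 := ⟨n - 1, by omega⟩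
  rcases a with _ | a
  · simp [Module.End.one_eq_id]
  · rcases lt_or_ge (n+1) (a+1) with h | h
    · have := BS.isEmpty_of_lt h; exact Subsingleton.elim _ _
    · rw [KOp, if_neg (by omega), if_neg (by omega)]; exact block_comp_izero _ _

lemma KinvOp_comp_iminus (hi : i + 1 ≤ n) :
    KinvOp (n+1) (a+1) i ∘ₗ iminus n a = iminus n a ∘ₗ KinvOp n a i := by
  obtain ⟨n, rfl⟩ : ∃ m, n = m + 1 := ⟨n - 1, by omega⟩
  by_cases ha : a = n + 1
  · subst ha; simp [Module.End.one_eq_id]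
  · rw [KinvOp, if_neg (by omega), if_neg (by omega)]; exact block_comp_iminus _ _

lemma KinvOp_comp_izero (hi : i + 1 ≤ n) :
    KinvOp (n+1) a i ∘ₗ izero n a = izero n a ∘ₗ KinvOp n a i := by
  obtain ⟨n, rfl⟩ : ∃ m, n = m + 1 := ⟨n - 1, by omega⟩
  rcases a with _ | a
  · simp [Module.End.one_eq_id]
  · rcases lt_or_ge (n+1) (a+1) with h | h
    · have := BS.isEmpty_of_lt h; exact Subsingleton.elim _ _
    · rw [KinvOp, if_neg (by omega), if_neg (by omega)]; exact block_comp_izero _ _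

end LowerGenerators

section TopGenerator

variable (n a : ℕ)

lemma XpOp_top_comp_iminus_iminus :
    XpOp (n+2) (a+2) (n+1) ∘ₗ (iminus (n+1) (a+1) ∘ₗ iminus n a) = 0 := by
  rw [XpOp, if_pos rfl]
  split_ifs
  · simp
  · exact LinearMap.ext fun v => by simp

lemma XpOp_top_comp_iminus_izero :
    XpOp (n+2) (a+1) (n+1) ∘ₗ (iminus (n+1) a ∘ₗ izero n a) = 0 := by
  rw [XpOp, if_pos rfl]
  split_ifs
  · simp
  · exact LinearMap.ext fun v => by simp

lemma XpOp_top_comp_izero_iminus :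
    XpOp (n+2) (a+1) (n+1) ∘ₗ (izero (n+1) (a+1) ∘ₗ iminus n a)
      = iminus (n+1) a ∘ₗ izero n a := by
  rw [XpOp, if_pos rfl]
  split_ifs
  · have := BS.isEmpty_of_lt (show n < a by omega); exact Subsingleton.elim _ _
  · exact LinearMap.ext fun v => by simp

lemma XpOp_top_comp_izero_izero :
    XpOp (n+2) a (n+1) ∘ₗ (izero (n+1) a ∘ₗ izero n a) = 0 := by
  rcases a with _ | a
  · simp
  rw [XpOp, if_pos rfl]
  split_ifs
  · simp
  · exact LinearMap.ext fun v => by simp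

lemma XmOp_top_comp_iminus_iminus :
    XmOp (n+2) (a+2) (n+1) ∘ₗ (iminus (n+1) (a+1) ∘ₗ iminus n a) = 0 := by
  rw [XmOp, if_pos rfl]
  split_ifs
  · simp
  · exact LinearMap.ext fun v => by simp

lemma XmOp_top_comp_iminus_izero :
    XmOp (n+2) (a+1) (n+1) ∘ₗ (iminus (n+1) a ∘ₗ izero n a)
      = izero (n+1) (a+1) ∘ₗ iminus n a := by
  rw [XmOp, if_pos rfl]
  split_ifs
  · have := BS.isEmpty_of_lt (show n < a by omega); exact Subsingleton.elim _ _
  · exact LinearMap.ext fun v => by simp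

lemma XmOp_top_comp_izero_iminus :
    XmOp (n+2) (a+1) (n+1) ∘ₗ (izero (n+1) (a+1) ∘ₗ iminus n a) = 0 := by
  rw [XmOp, if_pos rfl]
  split_ifs
  · simp
  · exact LinearMap.ext fun v => by simp

lemma XmOp_top_comp_izero_izero :
    XmOp (n+2) a (n+1) ∘ₗ (izero (n+1) a ∘ₗ izero n a) = 0 := by
  rcases a with _ | a
  · simp
  rw [XmOp, if_pos rfl]
  split_ifs
  · simp
  · exact LinearMap.ext fun v => by simp

lemma KOp_top_comp_iminus_iminus :
    KOp (n+2) (a+2) (n+1) ∘ₗ (iminus (n+1) (a+1) ∘ₗ iminus n a)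
      = iminus (n+1) (a+1) ∘ₗ iminus n a := by
  rw [KOp, if_pos rfl]
  split_ifs
  · simp [Module.End.one_eq_id]
  · exact LinearMap.ext fun v => by simp

lemma KOp_top_comp_iminus_izero :
    KOp (n+2) (a+1) (n+1) ∘ₗ (iminus (n+1) a ∘ₗ izero n a)
      = qq • (iminus (n+1) a ∘ₗ izero n a) := by
  rw [KOp, if_pos rfl]
  split_ifs
  · have := BS.isEmpty_of_lt (show n < a by omega); exact Subsingleton.elim _ _
  · exact LinearMap.ext fun v => by simp

lemma KOp_top_comp_izero_iminus :
    KOp (n+2) (a+1) (n+1) ∘ₗ (izero (n+1) (a+1) ∘ₗ iminus n a)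
      = qq⁻¹ • (izero (n+1) (a+1) ∘ₗ iminus n a) := by
  rw [KOp, if_pos rfl]
  split_ifs
  · have := BS.isEmpty_of_lt (show n < a by omega); exact Subsingleton.elim _ _
  · exact LinearMap.ext fun v => by simp

lemma KOp_top_comp_izero_izero :
    KOp (n+2) a (n+1) ∘ₗ (izero (n+1) a ∘ₗ izero n a) = izero (n+1) a ∘ₗ izero n a := by
  rcases a with _ | a
  · simp [Module.End.one_eq_id]
  rw [KOp, if_pos rfl]
  split_ifs
  · simp [Module.End.one_eq_id]
  · exact LinearMap.ext fun v => by simp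

lemma KinvOp_top_comp_iminus_iminus :
    KinvOp (n+2) (a+2) (n+1) ∘ₗ (iminus (n+1) (a+1) ∘ₗ iminus n a)
      = iminus (n+1) (a+1) ∘ₗ iminus n a := by
  rw [KinvOp, if_pos rfl]
  split_ifs
  · simp [Module.End.one_eq_id]
  · exact LinearMap.ext fun v => by simp

lemma KinvOp_top_comp_iminus_izero :
    KinvOp (n+2) (a+1) (n+1) ∘ₗ (iminus (n+1) a ∘ₗ izero n a)
      = qq⁻¹ • (iminus (n+1) a ∘ₗ izero n a) := by
  rw [KinvOp, if_pos rfl]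
  split_ifs
  · have := BS.isEmpty_of_lt (show n < a by omega); exact Subsingleton.elim _ _
  · exact LinearMap.ext fun v => by simp

lemma KinvOp_top_comp_izero_iminus :
    KinvOp (n+2) (a+1) (n+1) ∘ₗ (izero (n+1) (a+1) ∘ₗ iminus n a)
      = qq • (izero (n+1) (a+1) ∘ₗ iminus n a) := by
  rw [KinvOp, if_pos rfl]
  split_ifs
  · have := BS.isEmpty_of_lt (show n < a by omega); exact Subsingleton.elim _ _
  · exact LinearMap.ext fun v => by simp

lemma KinvOp_top_comp_izero_izero :
    KinvOp (n+2) a (n+1) ∘ₗ (izero (n+1) a ∘ₗ izero n a)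
      = izero (n+1) a ∘ₗ izero n a := by
  rcases a with _ | a
  · simp [Module.End.one_eq_id]
  rw [KinvOp, if_pos rfl]
  split_ifs
  · simp [Module.End.one_eq_id]
  · exact LinearMap.ext fun v => by simp

end TopGenerator

section Vout

variable {n a b c : ℕ}

@[simp] lemma vterm1_add (v w : V n a ⊗[A] (V n b ⊗[A] V n c)) :
    vterm1 n a b c (v + w) = vterm1 n a b c v + vterm1 n a b c w := by
  simp [vterm1, smul_add]

@[simp] lemma vterm2_add (v w : V n a ⊗[A] (V n b ⊗[A] V n c)) :
    vterm2 n a b c (v + w) = vterm2 n a b c v + vterm2 n a b c w := by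
  simp [vterm2, smul_add]

@[simp] lemma vterm3_add (v w : V n a ⊗[A] (V n b ⊗[A] V n c)) :
    vterm3 n a b c (v + w) = vterm3 n a b c v + vterm3 n a b c w := by
  simp [vterm3, smul_add]

@[simp] lemma vterm1_smul (r : A) (v : V n a ⊗[A] (V n b ⊗[A] V n c)) :
    vterm1 n a b c (r • v) = r • vterm1 n a b c v := by
  simp [vterm1, smul_comm r]

@[simp] lemma vterm2_smul (r : A) (v : V n a ⊗[A] (V n b ⊗[A] V n c)) :
    vterm2 n a b c (r • v) = r • vterm2 n a b c v := by
  simp [vterm2, smul_comm r]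

@[simp] lemma vterm3_smul (r : A) (v : V n a ⊗[A] (V n b ⊗[A] V n c)) :
    vterm3 n a b c (r • v) = r • vterm3 n a b c v := by
  simp [vterm3, smul_comm r]

@[simp] lemma vterm1_zero : vterm1 n a b c 0 = 0 := by simp [vterm1]
@[simp] lemma vterm2_zero : vterm2 n a b c 0 = 0 := by simp [vterm2]
@[simp] lemma vterm3_zero : vterm3 n a b c 0 = 0 := by simp [vterm3]

end Vout

section Intertwining

variable {n i : ℕ} {a b c : ℕ} (v : V n a ⊗[A] (V n b ⊗[A] V n c))

lemma t3Xp_vterm1 (hi : i + 1 ≤ n) :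
    t3Xp (n+1) (a+1) b c i (vterm1 n a b c v) = vterm1 n a b c (t3Xp n a b c i v) := by
  simp only [t3Xp, vterm1, LinearMap.add_apply, map_add, smul_add, map_smul, map_map, ← map_comp,
    KOp_comp_izero hi, XpOp_comp_iminus hi, XpOp_comp_izero hi,
    LinearMap.id_comp, LinearMap.comp_id]

lemma t3Xp_vterm2 (hi : i + 1 ≤ n) :
    t3Xp (n+1) a (b+1) c i (vterm2 n a b c v) = vterm2 n a b c (t3Xp n a b c i v) := by
  simp only [t3Xp, vterm2, LinearMap.add_apply, map_add, smul_add, map_smul, map_map, ← map_comp,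
    KOp_comp_iminus hi, KOp_comp_izero hi, XpOp_comp_iminus hi, XpOp_comp_izero hi,
    LinearMap.id_comp, LinearMap.comp_id]

lemma t3Xp_vterm3 (hi : i + 1 ≤ n) :
    t3Xp (n+1) a b (c+1) i (vterm3 n a b c v) = vterm3 n a b c (t3Xp n a b c i v) := by
  simp only [t3Xp, vterm3, LinearMap.add_apply, map_add, smul_add, map_smul, map_map, ← map_comp,
    KOp_comp_iminus hi, KOp_comp_izero hi, XpOp_comp_iminus hi, XpOp_comp_izero hi,
    LinearMap.id_comp, LinearMap.comp_id]

lemma t3Xm_vterm1 (hi : i + 1 ≤ n) :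
    t3Xm (n+1) (a+1) b c i (vterm1 n a b c v) = vterm1 n a b c (t3Xm n a b c i v) := by
  simp only [t3Xm, vterm1, LinearMap.add_apply, map_add, smul_add, map_smul, map_map, ← map_comp,
    KinvOp_comp_iminus hi, KinvOp_comp_izero hi, XmOp_comp_iminus hi, XmOp_comp_izero hi,
    LinearMap.id_comp, LinearMap.comp_id]

lemma t3Xm_vterm2 (hi : i + 1 ≤ n) :
    t3Xm (n+1) a (b+1) c i (vterm2 n a b c v) = vterm2 n a b c (t3Xm n a b c i v) := by
  simp only [t3Xm, vterm2, LinearMap.add_apply, map_add, smul_add, map_smul, map_map, ← map_comp,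
    KinvOp_comp_iminus hi, KinvOp_comp_izero hi, XmOp_comp_iminus hi, XmOp_comp_izero hi,
    LinearMap.id_comp, LinearMap.comp_id]

lemma t3Xm_vterm3 (hi : i + 1 ≤ n) :
    t3Xm (n+1) a b (c+1) i (vterm3 n a b c v) = vterm3 n a b c (t3Xm n a b c i v) := by
  simp only [t3Xm, vterm3, LinearMap.add_apply, map_add, smul_add, map_smul, map_map, ← map_comp,
    KinvOp_comp_izero hi, XmOp_comp_iminus hi, XmOp_comp_izero hi,
    LinearMap.id_comp, LinearMap.comp_id]

lemma t3K_vterm1 (hi : i + 1 ≤ n) :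
    t3K (n+1) (a+1) b c i (vterm1 n a b c v) = vterm1 n a b c (t3K n a b c i v) := by
  simp only [t3K, vterm1, map_smul, map_map, ← map_comp,
    KOp_comp_iminus hi, KOp_comp_izero hi]

lemma t3K_vterm2 (hi : i + 1 ≤ n) :
    t3K (n+1) a (b+1) c i (vterm2 n a b c v) = vterm2 n a b c (t3K n a b c i v) := by
  simp only [t3K, vterm2, map_smul, map_map, ← map_comp,
    KOp_comp_iminus hi, KOp_comp_izero hi]

lemma t3K_vterm3 (hi : i + 1 ≤ n) :
    t3K (n+1) a b (c+1) i (vterm3 n a b c v) = vterm3 n a b c (t3K n a b c i v) := by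
  simp only [t3K, vterm3, map_smul, map_map, ← map_comp,
    KOp_comp_iminus hi, KOp_comp_izero hi]

end Intertwining

theorem voutE_eigen_of_intertwining {i : ℕ} (μ : A)
    (T : (n a b c : ℕ) → Module.End A (V n a ⊗[A] (V n b ⊗[A] V n c)))
    (h₁ : ∀ n, i + 1 ≤ n → ∀ a b c v,
      T (n+1) (a+1) b c (vterm1 n a b c v) = vterm1 n a b c (T n a b c v))
    (h₂ : ∀ n, i + 1 ≤ n → ∀ a b c v,
      T (n+1) a (b+1) c (vterm2 n a b c v) = vterm2 n a b c (T n a b c v))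
    (h₃ : ∀ n, i + 1 ≤ n → ∀ a b c v,
      T (n+1) a b (c+1) (vterm3 n a b c v) = vterm3 n a b c (T n a b c v))
    (hbase : ∀ a b c, T (i+1) a b c (voutE (i+1) a b c) = μ • voutE (i+1) a b c)
    {n : ℕ} (hn : i + 1 ≤ n) (a b c : ℕ) :
    T n a b c (voutE n a b c) = μ • voutE n a b c := by
  induction n, hn using Nat.le_induction generalizing a b c with
  | base => exact hbase a b c
  | succ n hn ih =>
    rcases a with _ | a <;> rcases b with _ | b <;> rcases c with _ | c <;>
      simp only [voutE, map_add, map_zero, smul_add, smul_zero, h₁ n hn, h₂ n hn, h₃ n hn, ih,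
        vterm1_smul, vterm2_smul, vterm3_smul]

-- `vterm_j (n+1) (vterm_k n w)` is the piece placing `n + 1` in slot `j` and `n` in slot `k`.
theorem voutE_eigen_of_pieces (n : ℕ) (μ : A)
    (T : (a b c : ℕ) → Module.End A (V (n+2) a ⊗[A] (V (n+2) b ⊗[A] V (n+2) c)))
    (h₁₁ : ∀ a b c w, T (a+2) b c (vterm1 (n+1) (a+1) b c (vterm1 n a b c w))
      = μ • vterm1 (n+1) (a+1) b c (vterm1 n a b c w))
    (h₂₂ : ∀ a b c w, T a (b+2) c (vterm2 (n+1) a (b+1) c (vterm2 n a b c w))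
      = μ • vterm2 (n+1) a (b+1) c (vterm2 n a b c w))
    (h₃₃ : ∀ a b c w, T a b (c+2) (vterm3 (n+1) a b (c+1) (vterm3 n a b c w))
      = μ • vterm3 (n+1) a b (c+1) (vterm3 n a b c w))
    (h₁₂ : ∀ a b c w, T (a+1) (b+1) c
      (vterm1 (n+1) a (b+1) c (vterm2 n a b c w) + vterm2 (n+1) (a+1) b c (vterm1 n a b c w))
      = μ • (vterm1 (n+1) a (b+1) c (vterm2 n a b c w)
        + vterm2 (n+1) (a+1) b c (vterm1 n a b c w)))
    (h₁₃ : ∀ a b c w, T (a+1) b (c+1)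
      (vterm1 (n+1) a b (c+1) (vterm3 n a b c w) + vterm3 (n+1) (a+1) b c (vterm1 n a b c w))
      = μ • (vterm1 (n+1) a b (c+1) (vterm3 n a b c w)
        + vterm3 (n+1) (a+1) b c (vterm1 n a b c w)))
    (h₂₃ : ∀ a b c w, T a (b+1) (c+1)
      (vterm2 (n+1) a b (c+1) (vterm3 n a b c w) + vterm3 (n+1) a (b+1) c (vterm2 n a b c w))
      = μ • (vterm2 (n+1) a b (c+1) (vterm3 n a b c w)
        + vterm3 (n+1) a (b+1) c (vterm2 n a b c w)))
    (a b c : ℕ) : T a b c (voutE (n+2) a b c) = μ • voutE (n+2) a b c := by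
  have h₂₁ := fun a b c w => eq_sub_of_add_eq' <| (map_add _ _ _).symm.trans <|
    (h₁₂ a b c w).trans (smul_add _ _ _)
  have h₃₁ := fun a b c w => eq_sub_of_add_eq' <| (map_add _ _ _).symm.trans <|
    (h₁₃ a b c w).trans (smul_add _ _ _)
  have h₃₂ := fun a b c w => eq_sub_of_add_eq' <| (map_add _ _ _).symm.trans <|
    (h₂₃ a b c w).trans (smul_add _ _ _)
  rcases a with _ | _ | a <;> rcases b with _ | _ | b <;> rcases c with _ | _ | c <;>
    simp only [voutE, vterm1_add, vterm2_add, vterm3_add, vterm1_zero, vterm2_zero, vterm3_zero,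
      map_add, map_zero, smul_add, smul_zero, h₁₁, h₂₂, h₃₃, h₂₁, h₃₁, h₃₂] <;>
    abel

lemma smul_add_smul_eq_zero {R M : Type*} [Semiring R] [AddCommMonoid M] [Module R M]
    {r s : R} (h : r + s = 0) (x : M) : r • x + s • x = 0 := by
  rw [← add_smul, h, zero_smul]

theorem t3Xp_top_voutE (n a b c : ℕ) : t3Xp (n+2) a b c (n+1) (voutE (n+2) a b c) = 0 := by
  rw [voutE_eigen_of_pieces n 0 (fun a b c => t3Xp (n+2) a b c (n+1)), zero_smul] <;>
    intro a b c w <;>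
    simp only [t3Xp, vterm1, vterm2, vterm3, LinearMap.add_apply, map_add, map_smul, map_map,
      ← map_comp, LinearMap.id_comp, XpOp_top_comp_iminus_iminus, XpOp_top_comp_iminus_izero,
      XpOp_top_comp_izero_iminus, XpOp_top_comp_izero_izero, KOp_top_comp_iminus_iminus,
      KOp_top_comp_iminus_izero, KOp_top_comp_izero_iminus, KOp_top_comp_izero_izero,
      map_smul_left, map_smul_right, map_zero_left, map_zero_right, LinearMap.smul_apply,
      LinearMap.zero_apply, smul_zero, add_zero, zero_add, zero_smul, smul_smul, zero_mul] <;>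
    exact smul_add_smul_eq_zero (by ring) _

theorem t3Xm_top_voutE (n a b c : ℕ) : t3Xm (n+2) a b c (n+1) (voutE (n+2) a b c) = 0 := by
  rw [voutE_eigen_of_pieces n 0 (fun a b c => t3Xm (n+2) a b c (n+1)), zero_smul] <;>
    intro a b c w <;>
    simp only [t3Xm, vterm1, vterm2, vterm3, LinearMap.add_apply, map_add, map_smul, map_map,
      ← map_comp, LinearMap.id_comp, XmOp_top_comp_iminus_iminus, XmOp_top_comp_iminus_izero,
      XmOp_top_comp_izero_iminus, XmOp_top_comp_izero_izero, KinvOp_top_comp_iminus_iminus,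
      KinvOp_top_comp_iminus_izero, KinvOp_top_comp_izero_iminus, KinvOp_top_comp_izero_izero,
      map_smul_left, map_smul_right, map_zero_left, map_zero_right, LinearMap.smul_apply,
      LinearMap.zero_apply, smul_zero, add_zero, zero_add, zero_smul, smul_smul, zero_mul] <;>
    exact smul_add_smul_eq_zero (by ring) _

theorem t3K_top_voutE (n a b c : ℕ) :
    t3K (n+2) a b c (n+1) (voutE (n+2) a b c) = voutE (n+2) a b c := by
  rw [voutE_eigen_of_pieces n 1 (fun a b c => t3K (n+2) a b c (n+1)), one_smul] <;>
    intro a b c w <;>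
    simp only [t3K, vterm1, vterm2, vterm3, map_add, map_smul, map_map, ← map_comp,
      KOp_top_comp_iminus_iminus, KOp_top_comp_iminus_izero, KOp_top_comp_izero_iminus,
      KOp_top_comp_izero_izero, map_smul_left, map_smul_right, one_smul,
      smul_inv_smul₀ qq_ne_zero, inv_smul_smul₀ qq_ne_zero]

theorem statement12_general (n a b c : ℕ) :
    ∀ i, 1 ≤ i → i ≤ n - 1 →
      t3Xp n a b c i (voutE n a b c) = 0 ∧
      t3Xm n a b c i (voutE n a b c) = 0 ∧
      t3K n a b c i (voutE n a b c) = voutE n a b c := by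
  intro i hi hin
  obtain ⟨m, rfl⟩ : ∃ m, i = m + 1 := ⟨i - 1, by omega⟩
  have hn : m + 2 ≤ n := by omega
  refine ⟨?_, ?_, ?_⟩
  · simpa using voutE_eigen_of_intertwining 0 (fun n a b c => t3Xp n a b c (m+1))
      (fun _ hn _ _ _ v => t3Xp_vterm1 v hn) (fun _ hn _ _ _ v => t3Xp_vterm2 v hn)
      (fun _ hn _ _ _ v => t3Xp_vterm3 v hn) (by simpa using t3Xp_top_voutE m) hn a b c
  · simpa using voutE_eigen_of_intertwining 0 (fun n a b c => t3Xm n a b c (m+1))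
      (fun _ hn _ _ _ v => t3Xm_vterm1 v hn) (fun _ hn _ _ _ v => t3Xm_vterm2 v hn)
      (fun _ hn _ _ _ v => t3Xm_vterm3 v hn) (by simpa using t3Xm_top_voutE m) hn a b c
  · simpa using voutE_eigen_of_intertwining 1 (fun n a b c => t3K n a b c (m+1))
      (fun _ hn _ _ _ v => t3K_vterm1 v hn) (fun _ hn _ _ _ v => t3K_vterm2 v hn)
      (fun _ hn _ _ _ v => t3K_vterm3 v hn) (by simpa using t3K_top_voutE m) hn a b c

/-- for `a + b + c = n`, the vector `v_out^n_{a,b,c} ∈ V_a^n ⊗ V_b^n ⊗ V_c^n`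
is `U_q(sl_n)`-invariant: `Δ⁽²⁾(X_i^±)` kills it and `Δ⁽²⁾(K_i)` fixes it, for every
`i = 1, …, n-1`; equivalently, the map `𝔸 → V_a^n ⊗ V_b^n ⊗ V_c^n`, `1 ↦ v_out^n_{a,b,c}`,
is a map of `U_q(sl_n)`-modules. -/
theorem statement12 (n a b c : ℕ) (habc : a + b + c = n) :
    ∀ i, 1 ≤ i → i ≤ n - 1 →
      t3Xp n a b c i (voutE n a b c) = 0 ∧
      t3Xm n a b c i (voutE n a b c) = 0 ∧
      t3K n a b c i (voutE n a b c) = voutE n a b c :=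
  statement12_general n a b c
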